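/- arXiv:1107.2002 — 2 statements merged into one kernel-verified Lean document; each statement's English description precedes it below -/
import Mathlib

section
/- Combining the previous two results: for a rotationally symmetric potential U in the local east-north-up frame at P, U_xx(P) = |∇U(P)| · cos(arcsin(U_Z(P)/|∇U(P)|)) · (X_P² + Y_P²)^{−1/2}, i.e. the east-east second derivative equals |∇U| times the principal curvature along the east direction. -/
open Real

/-- First directional (partial) derivative of `U` at `P` along `v`. -/
noncomputable def pd (U : (Fin 3 → ℝ) → ℝ) (P v : Fin 3 → ℝ) : ℝ := fderiv ℝ U P v

/-- Second directional derivative (Hessian bilinear form) of `U` at `P` along `v, w`. -/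
noncomputable def pd2 (U : (Fin 3 → ℝ) → ℝ) (P v w : Fin 3 → ℝ) : ℝ :=
  fderiv ℝ (fun p => fderiv ℝ U p w) P v

/-- Gradient vector of `U` at `P` (components are the partial derivatives). -/
noncomputable def gradv (U : (Fin 3 → ℝ) → ℝ) (P : Fin 3 → ℝ) : Fin 3 → ℝ :=
  fun i => fderiv ℝ U P (Pi.single i 1)

/-- Euclidean norm on `ℝ³`. -/
noncomputable def enorm3 (v : Fin 3 → ℝ) : ℝ := Real.sqrt (v 0 ^ 2 + v 1 ^ 2 + v 2 ^ 2)

/-- Euclidean dot product on `ℝ³`. -/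
def dot3 (v w : Fin 3 → ℝ) : ℝ := v 0 * w 0 + v 1 * w 1 + v 2 * w 2

/-- Cross product on `ℝ³`. -/
def cross3 (v w : Fin 3 → ℝ) : Fin 3 → ℝ :=
  ![v 1 * w 2 - v 2 * w 1, v 2 * w 0 - v 0 * w 2, v 0 * w 1 - v 1 * w 0]

/-- Standard basis vectors of `ℝ³`. -/
def e3 (i : Fin 3) : Fin 3 → ℝ := Pi.single i 1

/-! The potential is constant along the horizontal circle `c θ = rotZ θ P`, whose velocity at
`θ = 0` is `t = (-P₁, P₀, 0) = r x`, with `r² = P₀² + P₁²`, and whose acceleration is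
`(-P₀, -P₁, 0)`. Differentiating `U ∘ c` once shows that the horizontal part of `∇U(P)` is parallel
to `(P₀, P₁)`; differentiating it twice gives `r² U_xx = ∂²U(t, t) = P₀ U_X + P₁ U_Y`. As the
horizontal part of the gradient points outward, the right-hand side is `r` times its length
`|∇U| cos Φ`. -/

section LevelSetCurve

variable {𝕜 E F : Type*} [NontriviallyNormedField 𝕜] [NormedAddCommGroup E] [NormedSpace 𝕜 E]
  [NormedAddCommGroup F] [NormedSpace 𝕜 F] {f : E → F} {c c' : 𝕜 → E} {a : F}

theorem fderiv_apply_eq_zero_of_comp_eq_const {t : 𝕜} {v : E} (hf : DifferentiableAt 𝕜 f (c t))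
    (hc : HasDerivAt c v t) (hconst : ∀ s, f (c s) = a) : fderiv 𝕜 f (c t) v = 0 :=
  (hf.hasFDerivAt.comp_hasDerivAt t hc).unique <| by
    rw [show f ∘ c = fun _ => a from funext hconst]
    exact hasDerivAt_const t a

theorem fderiv_fderiv_apply_add_fderiv_eq_zero_of_comp_eq_const {t : 𝕜} {c'' : E}
    (hf : ContDiff 𝕜 2 f) (hc : ∀ s, HasDerivAt c (c' s) s) (hc' : HasDerivAt c' c'' t)
    (hconst : ∀ s, f (c s) = a) :
    fderiv 𝕜 (fderiv 𝕜 f) (c t) (c' t) (c' t) + fderiv 𝕜 f (c t) c'' = 0 := by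
  have hf' : Differentiable 𝕜 (fderiv 𝕜 f) :=
    (hf.fderiv_right (m := 1) le_rfl).differentiable one_ne_zero
  have hderiv : HasDerivAt (fun s => fderiv 𝕜 f (c s) (c' s))
      (fderiv 𝕜 (fderiv 𝕜 f) (c t) (c' t) (c' t) + fderiv 𝕜 f (c t) c'') t :=
    ((hf' (c t)).hasFDerivAt.comp_hasDerivAt t (hc t)).clm_apply hc'
  refine hderiv.unique ?_
  rw [show (fun s => fderiv 𝕜 f (c s) (c' s)) = fun _ => 0 from funext fun s =>
    fderiv_apply_eq_zero_of_comp_eq_const (hf.differentiable two_ne_zero (c s)) (hc s) hconst]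
  exact hasDerivAt_const t 0

theorem fderiv_apply_apply_eq_fderiv_fderiv {p : E} (hf : DifferentiableAt 𝕜 (fderiv 𝕜 f) p)
    (v w : E) : fderiv 𝕜 (fun q => fderiv 𝕜 f q w) p v = fderiv 𝕜 (fderiv 𝕜 f) p v w := by
  rw [fderiv_clm_apply hf (differentiableAt_const w)]
  simp

end LevelSetCurve

theorem ContinuousLinearMap.apply_eq_dot3 (L : (Fin 3 → ℝ) →L[ℝ] ℝ) (v : Fin 3 → ℝ) :
    L v = dot3 (fun i => L (Pi.single i 1)) v := by
  have hsingle (i : Fin 3) : L (Pi.single i (v i)) = L (Pi.single i 1) * v i := by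
    rw [mul_comm, ← smul_eq_mul, ← map_smul, ← Pi.single_smul', smul_eq_mul, mul_one]
  conv_lhs => rw [← Finset.univ_sum_single v]
  rw [map_sum, Fin.sum_univ_three, hsingle, hsingle, hsingle, dot3]

theorem fderiv_apply_eq_dot3_gradv (U : (Fin 3 → ℝ) → ℝ) (P v : Fin 3 → ℝ) :
    fderiv ℝ U P v = dot3 (gradv U P) v :=
  (fderiv ℝ U P).apply_eq_dot3 v

theorem dot_eq_sqrt_mul_sqrt_of_cross_eq_zero {a b c d : ℝ} (hcross : a * d - b * c = 0)
    (hdot : 0 ≤ a * c + b * d) : a * c + b * d = √(a ^ 2 + b ^ 2) * √(c ^ 2 + d ^ 2) := by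
  rw [← sqrt_mul (by positivity), ← sqrt_sq hdot]
  congr 1
  linear_combination (-(a * d - b * c)) * hcross

theorem sqrt_add_sq_mul_cos_arcsin {s : ℝ} (hs : 0 ≤ s) (b : ℝ) :
    √(s + b ^ 2) * cos (arcsin (b / √(s + b ^ 2))) = √s := by
  rcases (sqrt_nonneg (s + b ^ 2)).eq_or_lt with h | h
  · rw [← h, zero_mul, eq_comm, sqrt_eq_zero hs]
    nlinarith [sqrt_eq_zero'.mp h.symm, sq_nonneg b]
  · have hne : s + b ^ 2 ≠ 0 := (sqrt_pos.mp h).ne'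
    rw [cos_arcsin, ← sqrt_mul (by positivity), div_pow, sq_sqrt (by positivity), mul_sub, mul_one,
      mul_div_cancel₀ _ hne, add_sub_cancel_right]

noncomputable def rotZ (θ : ℝ) (v : Fin 3 → ℝ) : Fin 3 → ℝ :=
  ![cos θ * v 0 - sin θ * v 1, sin θ * v 0 + cos θ * v 1, v 2]

def zCross (v : Fin 3 → ℝ) : Fin 3 → ℝ := ![-v 1, v 0, 0]

def IsRotZInvariant (U : (Fin 3 → ℝ) → ℝ) : Prop := ∀ θ v, U (rotZ θ v) = U v

@[simp]
theorem rotZ_zero (v : Fin 3 → ℝ) : rotZ 0 v = v := by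
  ext i; fin_cases i <;> simp [rotZ]

theorem hasDerivAt_rotZ (v : Fin 3 → ℝ) (θ : ℝ) :
    HasDerivAt (fun θ => rotZ θ v) (rotZ θ (zCross v)) θ := by
  rw [hasDerivAt_pi]
  intro i
  fin_cases i
  · exact (((hasDerivAt_cos θ).mul_const (v 0)).sub
      ((hasDerivAt_sin θ).mul_const (v 1))).congr_deriv
      (by simp only [rotZ, zCross, Fin.zero_eta, Matrix.cons_val]; ring)
  · exact (((hasDerivAt_sin θ).mul_const (v 0)).add
      ((hasDerivAt_cos θ).mul_const (v 1))).congr_deriv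
      (by simp only [rotZ, zCross, Fin.mk_one, Matrix.cons_val]; ring)
  · simpa [rotZ, zCross] using hasDerivAt_const θ (v 2)

namespace IsRotZInvariant

variable {U : (Fin 3 → ℝ) → ℝ} (hsym : IsRotZInvariant U) (P : Fin 3 → ℝ)
include hsym

theorem gradv_cross_eq_zero (hU : Differentiable ℝ U) :
    gradv U P 0 * P 1 - gradv U P 1 * P 0 = 0 := by
  have h := fderiv_apply_eq_zero_of_comp_eq_const (hU _) (hasDerivAt_rotZ P 0) (hsym · P)
  simp only [rotZ_zero, fderiv_apply_eq_dot3_gradv] at h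
  simp only [dot3, zCross, Matrix.cons_val] at h
  linear_combination -h

theorem fderiv_fderiv_zCross_zCross (hU : ContDiff ℝ 2 U) :
    fderiv ℝ (fderiv ℝ U) P (zCross P) (zCross P) = gradv U P 0 * P 0 + gradv U P 1 * P 1 := by
  have h := fderiv_fderiv_apply_add_fderiv_eq_zero_of_comp_eq_const hU
    (hasDerivAt_rotZ P) (by simpa using hasDerivAt_rotZ (zCross P) 0) (hsym · P)
  simp only [rotZ_zero, fderiv_apply_eq_dot3_gradv] at h
  have hcurv :
      dot3 (gradv U P) (zCross (zCross P)) = -(gradv U P 0 * P 0 + gradv U P 1 * P 1) := by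
    simp only [dot3, zCross, Matrix.cons_val]
    ring
  linear_combination h - hcurv

end IsRotZInvariant

theorem stmt10_general (U : (Fin 3 → ℝ) → ℝ) (hU : ContDiff ℝ 2 U) (P : Fin 3 → ℝ)
    (hsym : ∀ (θ : ℝ) (v : Fin 3 → ℝ),
      U ![Real.cos θ * v 0 - Real.sin θ * v 1,
          Real.sin θ * v 0 + Real.cos θ * v 1, v 2] = U v)
    -- ∇U(P) points to the outward side (consistent with the outward-normal convention
    -- `k₁ = U_xx/|∇U|` for the principal curvature along the east direction)
    (hout : 0 ≤ gradv U P 0 * P 0 + gradv U P 1 * P 1) :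
    let n := enorm3 (gradv U P)
    let x : Fin 3 → ℝ := (Real.sqrt (P 0 ^ 2 + P 1 ^ 2))⁻¹ • ![-(P 1), P 0, 0]
    pd2 U P x x =
      n * Real.cos (Real.arcsin (gradv U P 2 / n)) / Real.sqrt (P 0 ^ 2 + P 1 ^ 2) := by
  intro n x
  have hrot : IsRotZInvariant U := hsym
  have hxx : pd2 U P x x = (√(P 0 ^ 2 + P 1 ^ 2))⁻¹ * (√(P 0 ^ 2 + P 1 ^ 2))⁻¹ *
      (gradv U P 0 * P 0 + gradv U P 1 * P 1) := by
    have hU' := (hU.fderiv_right (m := 1) le_rfl).differentiable one_ne_zero P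
    rw [pd2, fderiv_apply_apply_eq_fderiv_fderiv hU']
    simp only [x, map_smul, smul_apply, smul_eq_mul]
    rw [← mul_assoc]
    exact congrArg _ (hrot.fderiv_fderiv_zCross_zCross P hU)
  rw [hxx, dot_eq_sqrt_mul_sqrt_of_cross_eq_zero
    (hrot.gradv_cross_eq_zero P (hU.differentiable two_ne_zero)) hout]
  simp only [n, enorm3]
  rw [sqrt_add_sq_mul_cos_arcsin (by positivity)]
  -- on the axis `x = 0` and the division by `r = 0` is zero, so both sides vanish
  rcases eq_or_ne √(P 0 ^ 2 + P 1 ^ 2) 0 with hr | hr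
  · simp [hr]
  · field_simp

/-- for a rotationally symmetric potential, in the local east–north–up
frame at `P`, `U_xx(P) = |∇U(P)| · cos(arcsin(U_Z/|∇U|)) · (X_P² + Y_P²)^(-1/2)`,
i.e. the east–east second derivative equals `|∇U|` times the principal curvature along
the east direction. -/
theorem stmt10 (U : (Fin 3 → ℝ) → ℝ) (hU : ContDiff ℝ 2 U) (P : Fin 3 → ℝ)
    (hsym : ∀ (θ : ℝ) (v : Fin 3 → ℝ),
      U ![Real.cos θ * v 0 - Real.sin θ * v 1,
          Real.sin θ * v 0 + Real.cos θ * v 1, v 2] = U v)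
    (haxis : P 0 ^ 2 + P 1 ^ 2 ≠ 0)
    (hg : gradv U P ≠ 0)
    -- ∇U(P) points to the outward side (consistent with the outward-normal convention
    -- `k₁ = U_xx/|∇U|` for the principal curvature along the east direction)
    (hout : 0 ≤ gradv U P 0 * P 0 + gradv U P 1 * P 1) :
    let n := enorm3 (gradv U P)
    let x : Fin 3 → ℝ := (Real.sqrt (P 0 ^ 2 + P 1 ^ 2))⁻¹ • ![-(P 1), P 0, 0]
    pd2 U P x x =
      n * Real.cos (Real.arcsin (gradv U P 2 / n)) / Real.sqrt (P 0 ^ 2 + P 1 ^ 2) :=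
  stmt10_general U hU P hsym hout
end

section
/- Plumbline curvature formula in Cartesian coordinates: the curvature at P of the integral curve of the gradient field ∇U (the plumbline) of a C² function U with ∇U(P) ≠ 0 equals |∇U × (Hess U · ∇U)| / |∇U|³ evaluated at P, which in components is the expression k_pl(P) = { [U_Y(U_XZ U_X + U_YZ U_Y + U_ZZ U_Z) − U_Z(U_XY U_X + U_YY U_Y + U_YZ U_Z)]² + [U_Z(U_XX U_X + U_XY U_Y + U_XZ U_Z) − U_X(U_XZ U_X + U_YZ U_Y + U_ZZ U_Z)]² + [U_X(U_XY U_X + U_YY U_Y + U_YZ U_Z) − U_Y(U_XX U_X + U_XY U_Y + U_XZ U_Z)]² }^{1/2} / (U_X² + U_Y² + U_Z²)^{3/2}. -/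
open Real

/-! The unit tangent of the plumbline is `N (∇U ∘ c)` with `N v = |v|⁻¹ v`. Along the curve,
`∇U ∘ c` has velocity `Hess U · (|∇U|⁻¹ ∇U)`, and the derivative of `N` at `v` in the direction `w`
is `|v|⁻¹` times the component of `w` orthogonal to `v`; by Lagrange's identity that component
has length `|v × w| / |v|`. Hence the curvature is `|∇U × Hess U · ∇U| / |∇U|³`. -/

open scoped RealInnerProductSpace Matrix

section Normalization

variable {F : Type*} [NormedAddCommGroup F] [InnerProductSpace ℝ F]

theorem HasDerivAt.norm_inv_smul {γ : ℝ → F} {w : F} {t : ℝ} (hγ : HasDerivAt γ w t)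
    (h0 : γ t ≠ 0) :
    HasDerivAt (fun s => ‖γ s‖⁻¹ • γ s) (‖γ t‖⁻¹ • (w - (⟪γ t, w⟫ / ‖γ t‖ ^ 2) • γ t)) t := by
  have hn : 0 < ‖γ t‖ := norm_pos_iff.2 h0
  have hnorm : HasDerivAt (fun s => ‖γ s‖) (⟪γ t, w⟫ / ‖γ t‖) t := by
    have := hγ.norm_sq.sqrt (by positivity)
    simp only [Real.sqrt_sq (norm_nonneg _)] at this
    convert this using 1
    field_simp
  refine ((hnorm.inv hn.ne').smul hγ).congr_deriv ?_
  change ‖γ t‖⁻¹ • w + _ = _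
  module

theorem norm_sub_inner_div_smul_mul_norm (v w : F) :
    ‖w - (⟪v, w⟫ / ‖v‖ ^ 2) • v‖ * ‖v‖ = √(‖v‖ ^ 2 * ‖w‖ ^ 2 - ⟪v, w⟫ ^ 2) := by
  rcases eq_or_ne v 0 with rfl | hv
  · simp
  have hn : 0 < ‖v‖ := norm_pos_iff.2 hv
  rw [← Real.sqrt_sq (by positivity : 0 ≤ ‖w - (⟪v, w⟫ / ‖v‖ ^ 2) • v‖ * ‖v‖), mul_pow,
    norm_sub_sq_real, norm_smul, inner_smul_right, real_inner_comm, Real.norm_eq_abs, mul_pow,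
    sq_abs]
  congr 1
  field_simp
  ring

end Normalization

-- `Fin 3 → ℝ` carries the sup norm; the Euclidean structure is read off `EuclideanSpace ℝ (Fin 3)`.
theorem enorm3_eq_norm (v : Fin 3 → ℝ) :
    enorm3 v = ‖(WithLp.toLp 2 v : EuclideanSpace ℝ (Fin 3))‖ := by
  simp [enorm3, EuclideanSpace.norm_eq, Fin.sum_univ_three]

theorem dot3_eq_inner (v w : Fin 3 → ℝ) :
    dot3 v w = ⟪(WithLp.toLp 2 v : EuclideanSpace ℝ (Fin 3)), WithLp.toLp 2 w⟫ := by
  simp [dot3, PiLp.inner_apply, Fin.sum_univ_three, mul_comm]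

theorem enorm3_smul (r : ℝ) (v : Fin 3 → ℝ) : enorm3 (r • v) = |r| * enorm3 v := by
  simp only [enorm3_eq_norm, WithLp.toLp_smul, norm_smul, Real.norm_eq_abs]

theorem cross3_smul_right (r : ℝ) (v w : Fin 3 → ℝ) : cross3 v (r • w) = r • cross3 v w := by
  ext i; fin_cases i <;> simp [cross3] <;> ring

theorem enorm3_cross3 (v w : Fin 3 → ℝ) :
    enorm3 (cross3 v w) = √(enorm3 v ^ 2 * enorm3 w ^ 2 - dot3 v w ^ 2) := by
  simp only [enorm3, dot3, Real.sq_sqrt (by positivity : (0 : ℝ) ≤ _ ^ 2 + _ ^ 2 + _ ^ 2)]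
  congr 1
  simp [cross3]
  ring

theorem enorm3_sub_dot3_div_smul_mul_enorm3 (v w : Fin 3 → ℝ) :
    enorm3 (w - (dot3 v w / enorm3 v ^ 2) • v) * enorm3 v = enorm3 (cross3 v w) := by
  rw [enorm3_cross3]
  simpa [enorm3_eq_norm, dot3_eq_inner] using
    norm_sub_inner_div_smul_mul_norm (WithLp.toLp 2 v : EuclideanSpace ℝ (Fin 3)) (WithLp.toLp 2 w)

theorem HasDerivAt.enorm3_inv_smul {γ : ℝ → Fin 3 → ℝ} {w : Fin 3 → ℝ} {t : ℝ}
    (hγ : HasDerivAt γ w t) (h0 : γ t ≠ 0) :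
    HasDerivAt (fun s => (enorm3 (γ s))⁻¹ • γ s)
      ((enorm3 (γ t))⁻¹ • (w - (dot3 (γ t) w / enorm3 (γ t) ^ 2) • γ t)) t := by
  let e := EuclideanSpace.equiv (Fin 3) ℝ
  have h := (e.symm.hasFDerivAt.comp_hasDerivAt t hγ).norm_inv_smul (by simpa [e] using h0)
  simp only [enorm3_eq_norm, dot3_eq_inner]
  exact e.hasFDerivAt.comp_hasDerivAt t h

theorem enorm3_deriv_enorm3_inv_smul {γ : ℝ → Fin 3 → ℝ} {w : Fin 3 → ℝ} {t : ℝ}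
    (hγ : HasDerivAt γ w t) (h0 : γ t ≠ 0) :
    enorm3 (deriv (fun s => (enorm3 (γ s))⁻¹ • γ s) t)
      = enorm3 (cross3 (γ t) w) / enorm3 (γ t) ^ 2 := by
  have hn : 0 < enorm3 (γ t) := by
    rw [enorm3_eq_norm]; simpa using h0
  rw [(hγ.enorm3_inv_smul h0).deriv, enorm3_smul, abs_inv, abs_of_pos hn,
    ← enorm3_sub_dot3_div_smul_mul_enorm3]
  field_simp

theorem ContDiff.differentiable_fderiv {E F : Type*} [NormedAddCommGroup E] [NormedSpace ℝ E]
    [NormedAddCommGroup F] [NormedSpace ℝ F] {f : E → F} (hf : ContDiff ℝ 2 f) :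
    Differentiable ℝ (fderiv ℝ f) :=
  (hf.fderiv_right (m := 1) le_rfl).differentiable one_ne_zero

section Hessian

noncomputable def hessian (U : (Fin 3 → ℝ) → ℝ) (P : Fin 3 → ℝ) : Matrix (Fin 3) (Fin 3) ℝ :=
  Matrix.of fun i j => pd2 U P (e3 i) (e3 j)

variable {U : (Fin 3 → ℝ) → ℝ}

theorem pd2_eq_fderiv_fderiv {P : Fin 3 → ℝ} (hU : DifferentiableAt ℝ (fderiv ℝ U) P)
    (v w : Fin 3 → ℝ) : pd2 U P v w = fderiv ℝ (fderiv ℝ U) P v w := by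
  rw [pd2, fderiv_clm_apply hU (differentiableAt_const w)]
  simp

theorem pd2_comm (hU : ContDiff ℝ 2 U) (P v w : Fin 3 → ℝ) : pd2 U P v w = pd2 U P w v := by
  have hD := hU.differentiable_fderiv P
  rw [pd2_eq_fderiv_fderiv hD, pd2_eq_fderiv_fderiv hD]
  exact hU.contDiffAt.isSymmSndFDerivAt (by simp) v w

theorem hessian_mulVec (hU : ContDiff ℝ 2 U) (P v : Fin 3 → ℝ) :
    hessian U P *ᵥ v = fun i => pd2 U P v (e3 i) := by
  have hD := hU.differentiable_fderiv P
  ext i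
  have hv : v = ∑ j, v j • e3 j := by
    ext k; simp [e3, Pi.single_apply]
  simp only [hessian, Matrix.mulVec, dotProduct, Matrix.of_apply]
  conv_rhs => rw [hv, pd2_eq_fderiv_fderiv hD]
  simp only [map_sum, map_smul, FunLike.coe_sum, FunLike.coe_smul,
    Finset.sum_apply, Pi.smul_apply, smul_eq_mul]
  refine Finset.sum_congr rfl fun j _ => ?_
  rw [pd2_comm hU, pd2_eq_fderiv_fderiv hD, mul_comm]

theorem HasDerivAt.gradv_comp (hU : ContDiff ℝ 2 U) {c : ℝ → Fin 3 → ℝ} {v : Fin 3 → ℝ}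
    {t : ℝ} (hc : HasDerivAt c v t) :
    HasDerivAt (fun s => gradv U (c s)) (hessian U (c t) *ᵥ v) t := by
  have hD := hU.differentiable_fderiv
  rw [hessian_mulVec hU]
  refine hasDerivAt_pi.2 fun i => ?_
  have h := ((hD (c t)).hasFDerivAt.clm_apply (hasFDerivAt_const (e3 i) (c t))).comp_hasDerivAt t hc
  exact h.congr_deriv (by simp [pd2_eq_fderiv_fderiv (hD (c t))])

end Hessian

theorem enorm3_deriv_deriv_plumbline {U : (Fin 3 → ℝ) → ℝ} (hU : ContDiff ℝ 2 U)
    {P : Fin 3 → ℝ} (hg : gradv U P ≠ 0) {c : ℝ → Fin 3 → ℝ} (hc0 : c 0 = P)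
    (hc : ∀ t, HasDerivAt c ((enorm3 (gradv U (c t)))⁻¹ • gradv U (c t)) t) :
    enorm3 (deriv (deriv c) 0)
      = enorm3 (cross3 (gradv U P) (hessian U P *ᵥ gradv U P)) / enorm3 (gradv U P) ^ 3 := by
  have hT : deriv c = fun t => (enorm3 (gradv U (c t)))⁻¹ • gradv U (c t) :=
    funext fun t => (hc t).deriv
  have hγ := (hc 0).gradv_comp hU
  rw [hc0] at hγ
  have hn : 0 < enorm3 (gradv U P) := by
    rw [enorm3_eq_norm]; simpa using hg
  rw [hT, enorm3_deriv_enorm3_inv_smul hγ (by rwa [hc0]), hc0, Matrix.mulVec_smul,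
    cross3_smul_right, enorm3_smul, abs_inv, abs_of_pos hn]
  field_simp

/-- plumbline curvature in Cartesian coordinates: the curvature at `P`
of the integral curve of the unit gradient field equals
`|∇U × (Hess U · ∇U)| / |∇U|³`, which in components is formula (1.12). -/
theorem stmt11 (U : (Fin 3 → ℝ) → ℝ) (hU : ContDiff ℝ 2 U) (P : Fin 3 → ℝ)
    (hg : gradv U P ≠ 0)
    (c : ℝ → Fin 3 → ℝ) (hc0 : c 0 = P)
    (hc : ∀ t, HasDerivAt c ((enorm3 (gradv U (c t)))⁻¹ • gradv U (c t)) t) :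
    let UX := pd U P (e3 0); let UY := pd U P (e3 1); let UZ := pd U P (e3 2)
    let UXX := pd2 U P (e3 0) (e3 0); let UYY := pd2 U P (e3 1) (e3 1)
    let UZZ := pd2 U P (e3 2) (e3 2); let UXY := pd2 U P (e3 0) (e3 1)
    let UXZ := pd2 U P (e3 0) (e3 2); let UYZ := pd2 U P (e3 1) (e3 2)
    let g := gradv U P
    -- Hess U · ∇U
    let Hg : Fin 3 → ℝ := ![UXX * UX + UXY * UY + UXZ * UZ,
                            UXY * UX + UYY * UY + UYZ * UZ,
                            UXZ * UX + UYZ * UY + UZZ * UZ]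
    let kpl := enorm3 (deriv (deriv c) 0)
    kpl = enorm3 (cross3 g Hg) / enorm3 g ^ 3 ∧
    kpl = Real.sqrt
        ((UY * (UXZ * UX + UYZ * UY + UZZ * UZ)
            - UZ * (UXY * UX + UYY * UY + UYZ * UZ)) ^ 2
          + (UZ * (UXX * UX + UXY * UY + UXZ * UZ)
            - UX * (UXZ * UX + UYZ * UY + UZZ * UZ)) ^ 2
          + (UX * (UXY * UX + UYY * UY + UYZ * UZ)
            - UY * (UXX * UX + UXY * UY + UXZ * UZ)) ^ 2) /
        (UX ^ 2 + UY ^ 2 + UZ ^ 2) ^ ((3:ℝ) / 2) := by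
  intro UX UY UZ UXX UYY UZZ UXY UXZ UYZ g Hg kpl
  have hHg : hessian U P *ᵥ g = Hg := by
    ext i
    fin_cases i <;>
      simp [hessian, Matrix.mulVec, dotProduct, Fin.sum_univ_three, Hg, pd2_comm hU P (e3 1) (e3 0),
        pd2_comm hU P (e3 2) (e3 0), pd2_comm hU P (e3 2) (e3 1)] <;> rfl
  have hk : kpl = enorm3 (cross3 g Hg) / enorm3 g ^ 3 := by
    rw [← hHg]; exact enorm3_deriv_deriv_plumbline hU hg hc0 hc
  have hden : enorm3 g ^ 3 = (UX ^ 2 + UY ^ 2 + UZ ^ 2) ^ ((3:ℝ) / 2) := by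
    rw [enorm3, Real.sqrt_eq_rpow, ← Real.rpow_natCast, ← Real.rpow_mul (by positivity)]
    norm_num
    rfl
  exact ⟨hk, hk.trans (by rw [hden]; rfl)⟩
end
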